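/- arXiv:0705.3822 — 6 statements merged into one kernel-verified Lean document; each statement's English description precedes it below -/
import Mathlib

section
/- Let X be a path-connected metric space with basepoint p. If (δ_j) is a nonincreasing sequence of elements of the covering spectrum CovSpec(X) converging to a limit δ₀ > 0, then δ₀ ∈ CovSpec(X). -/
/- Common definitions: path length, length/geodesic spaces, δ-covering groups,
   covering spectra, cut-off covering groups and spectra, free homotopy,
   loops-to-infinity. -/

open Metric Filter
open scoped NNReal ENNReal unitInterval

attribute [local instance] Path.Homotopic.setoid

/-- The length (total variation) of a path in a metric space. -/
noncomputable def pathLength {X : Type*} [MetricSpace X] {x y : X} (γ : Path x y) : ℝ≥0∞ :=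
  eVariationOn γ Set.univ

/-- A metric space is a length space if the distance between any two points is the
infimum of the lengths of paths joining them. -/
def IsLengthSpace (X : Type*) [MetricSpace X] : Prop :=
  ∀ x y : X, ENNReal.ofReal (dist x y) = ⨅ γ : Path x y, pathLength γ

/-- A metric space is a geodesic space if any two points are joined by a
distance-realizing path. -/
def IsGeodesicSpace (X : Type*) [MetricSpace X] : Prop :=
  ∀ x y : X, ∃ γ : Path x y, pathLength γ = ENNReal.ofReal (dist x y)

/-- The element of the fundamental group at `p` represented by the loop
`α⁻¹ · β · α` (i.e. follow `α` from `p` to `y`, the loop `β` at `y`, then `α` back). -/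
noncomputable def loopClass {X : Type*} [TopologicalSpace X] {p y : X}
    (α : Path p y) (β : Path y y) : FundamentalGroup X p :=
  FundamentalGroup.fromPath (X := TopCat.of X) ⟦(α.trans β).trans α.symm⟧

/-- The δ-covering group `π₁(X, δ, p)`: the normal subgroup of `π₁(X,p)` generated by
classes of loops `α⁻¹·β·α` with `β` lying in some open ball of radius `δ`. -/
noncomputable def coveringGroup (X : Type*) [MetricSpace X] (p : X) (δ : ℝ) :
    Subgroup (FundamentalGroup X p) :=
  Subgroup.normalClosure
    {g | ∃ (y : X) (β : Path y y) (α : Path p y),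
      (∃ c : X, ∀ t, β t ∈ Metric.ball c δ) ∧ g = loopClass α β}

/-- The covering spectrum of `X` (with basepoint `p`). -/
def covSpec (X : Type*) [MetricSpace X] (p : X) : Set ℝ :=
  {δ | 0 < δ ∧ ∀ δ' > δ, coveringGroup X p δ' ≠ coveringGroup X p δ}

/-- The `R` cut-off δ-covering group `π₁^{cut}(X, δ, R, x)`: the normal subgroup of
`π₁(X,x)` generated by classes of loops `α⁻¹·β·α` with `β` lying in some open ball of
radius `δ` or in the complement of the closed ball `B̄(x,R)`. -/
noncomputable def cutCoveringGroup (X : Type*) [MetricSpace X] (x : X) (δ R : ℝ) :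
    Subgroup (FundamentalGroup X x) :=
  Subgroup.normalClosure
    {g | ∃ (y : X) (β : Path y y) (α : Path x y),
      ((∃ c : X, ∀ t, β t ∈ Metric.ball c δ) ∨ (∀ t, β t ∉ Metric.closedBall x R)) ∧
      g = loopClass α β}

/-- The `R` cut-off covering spectrum of `(X,x)`. -/
def cutCovSpec (X : Type*) [MetricSpace X] (x : X) (R : ℝ) : Set ℝ :=
  {δ | 0 < δ ∧ ∀ δ' > δ, cutCoveringGroup X x δ' R ≠ cutCoveringGroup X x δ R}

/-- Two loops are freely homotopic: there is a homotopy through (not necessarily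
based) loops from one to the other. -/
def FreelyHomotopic {X : Type*} [TopologicalSpace X] {a b : X}
    (γ₀ : Path a a) (γ₁ : Path b b) : Prop :=
  ∃ H : C(I × I, X),
    (∀ t, H (0, t) = γ₀ t) ∧ (∀ t, H (1, t) = γ₁ t) ∧ ∀ s, H (s, 0) = H (s, 1)

/-- Two loops are freely homotopic within a subset `A`: the homotopy stays in `A`. -/
def FreelyHomotopicIn {X : Type*} [TopologicalSpace X] (A : Set X) {a b : X}
    (γ₀ : Path a a) (γ₁ : Path b b) : Prop :=
  ∃ H : C(I × I, X),
    (∀ t, H (0, t) = γ₀ t) ∧ (∀ t, H (1, t) = γ₁ t) ∧ (∀ s, H (s, 0) = H (s, 1)) ∧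
    ∀ p, H p ∈ A

/-- A loop has the loops-to-infinity property: for every compact set it is freely
homotopic to a loop outside that set. -/
def LoopToInfinity {X : Type*} [TopologicalSpace X] {a : X} (γ : Path a a) : Prop :=
  ∀ K : Set X, IsCompact K →
    ∃ (b : X) (η : Path b b), (∀ t, η t ∉ K) ∧ FreelyHomotopic γ η

/-- A space has the loops-to-infinity property if all of its loops do. -/
def LoopsToInfinity (X : Type*) [TopologicalSpace X] : Prop :=
  ∀ (a : X) (γ : Path a a), LoopToInfinity γ

/-- Concatenation of a finite list of loops based at `q`. -/
noncomputable def loopConcat {X : Type*} [TopologicalSpace X] (q : X) :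
    List (Path q q) → Path q q
  | [] => Path.refl q
  | γ :: rest => γ.trans (loopConcat q rest)

/-- A space is semilocally simply connected if every point has a neighborhood in which
every loop is null-homotopic in the whole space. -/
def SemilocallySimplyConnected (X : Type*) [TopologicalSpace X] : Prop :=
  ∀ x : X, ∃ U ∈ nhds x, ∀ (y : X) (γ : Path y y), (∀ t, γ t ∈ U) →
    γ.Homotopic (Path.refl y)

/-- A pointed ε-Hausdorff approximation. -/
def IsPointedHausdorffApprox {Z₁ Z₂ : Type*} [MetricSpace Z₁] [MetricSpace Z₂]
    (f : Z₁ → Z₂) (p₁ : Z₁) (p₂ : Z₂) (ε : ℝ) : Prop :=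
  f p₁ = p₂ ∧ (∀ a b : Z₁, |dist (f a) (f b) - dist a b| < ε) ∧
    ∀ z : Z₂, ∃ a : Z₁, dist z (f a) ≤ ε

instance coveringGroup_normal (X : Type*) [MetricSpace X] (p : X) (δ : ℝ) :
    (coveringGroup X p δ).Normal :=
  Subgroup.normalClosure_normal

instance cutCoveringGroup_normal (X : Type*) [MetricSpace X] (x : X) (δ R : ℝ) :
    (cutCoveringGroup X x δ R).Normal :=
  Subgroup.normalClosure_normal
lemma coveringGroup_mono {X : Type*} [MetricSpace X] (p : X) {δ δ' : ℝ} (h : δ ≤ δ') :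
    coveringGroup X p δ ≤ coveringGroup X p δ' := by
  apply Subgroup.normalClosure_mono
  rintro g ⟨y, β, α, ⟨c, hc⟩, rfl⟩
  exact ⟨y, β, α, ⟨c, fun t => Metric.ball_subset_ball h (hc t)⟩, rfl⟩

/-- If a nonincreasing sequence of elements of the covering spectrum of a
path-connected metric space converges to `δ₀ > 0`, then `δ₀` is in the covering spectrum. -/
theorem covSpec_mem_of_antitone_tendsto {X : Type*} [MetricSpace X] [PathConnectedSpace X]
    (p : X) (δseq : ℕ → ℝ) (hanti : Antitone δseq) (hmem : ∀ j, δseq j ∈ covSpec X p)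
    (δ₀ : ℝ) (hδ₀ : 0 < δ₀) (hlim : Tendsto δseq atTop (nhds δ₀)) :
    δ₀ ∈ covSpec X p := by
  refine ⟨hδ₀, fun δ' hδ' hcontra => ?_⟩
  obtain ⟨j, hj⟩ := (hlim.eventually (gt_mem_nhds hδ')).exists
  have h1 : δ₀ ≤ δseq j := hanti.le_of_tendsto hlim j
  exact (hmem j).2 δ' hj (le_antisymm
    (hcontra ▸ coveringGroup_mono p h1)
    (coveringGroup_mono p hj.le))
end

section
/- Let X be a path-connected length space with basepoint p, let δ > 0, and let γ be a rectifiable loop in X of length L(γ) ≤ 2δ which is not δ-homotopic to a point (i.e. the class of α⁻¹·γ·α does not lie in π₁(X,δ,p) for a path α from p to γ(0)). Then L(γ) = 2δ, and the parametrization of γ proportional to arclength, viewed as a 2δ-periodic continuous map γ : ℝ → X, satisfies d(γ(s),γ(t)) = |s − t| whenever |s − t| ≤ δ; in particular γ is a closed geodesic of length 2δ which is minimizing over every subinterval of half its length. -/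
/- Common definitions: path length, length/geodesic spaces, δ-covering groups,
   covering spectra, cut-off covering groups and spectra, free homotopy,
   loops-to-infinity. -/

open Metric Filter
open scoped NNReal ENNReal unitInterval

attribute [local instance] Path.Homotopic.setoid

/-!
Cutting `γ` at `s ≤ t` and inserting a path `τ` from `γ s` to `γ t` writes the class of `γ` as
the product of the classes of the loops `γ|[0,s] · τ · γ|[t,1]` and `γ|[s,t] · τ⁻¹`. A loop of
length `< 2δ` stays in the `δ`-ball around its base point, so if `γ` is not `δ`-homotopic to a
point, then `L(γ) = 2δ` and no `τ` is shorter than both arcs of `γ` from `γ s` to `γ t`. In a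
length space this gives `d(γ s, γ t) = min(ℓ, 2δ - ℓ)` with `ℓ = L(γ|[s,t])`, which is the
distance in `ℝ ⧸ 2δℤ` of the arclength parameters of `s` and `t`. Arclength is continuous, hence
onto `[0, 2δ]`, so `γ` factors through an isometric embedding of the circle `ℝ ⧸ 2δℤ`: the closed
geodesic.
-/

open Set

theorem Set.Icc.monotone_convexComb {a b : ℝ} {x y : Icc a b} (h : x ≤ y) :
    Monotone (Icc.convexComb x y) := fun u v huv => by
  change (1 - (u : ℝ)) * x + u * y ≤ (1 - (v : ℝ)) * x + v * y
  nlinarith [show (u : ℝ) ≤ v from huv, show (x : ℝ) ≤ y from h]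

theorem variationOnFromTo_eq_sub {α E : Type*} [LinearOrder α] [PseudoEMetricSpace E]
    (f : α → E) (s : Set α) (a b : α) :
    variationOnFromTo f s a b =
      (eVariationOn f (s ∩ Icc a b)).toReal - (eVariationOn f (s ∩ Icc b a)).toReal := by
  rcases le_total a b with h | h
  · rw [variationOnFromTo.eq_of_le f s h, eVariationOn.subsingleton f
      ((subsingleton_Icc_of_ge h).anti inter_subset_right), ENNReal.toReal_zero, sub_zero]
  · rw [variationOnFromTo.eq_of_ge f s h, eVariationOn.subsingleton f
      ((subsingleton_Icc_of_ge h).anti inter_subset_right), ENNReal.toReal_zero, zero_sub]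

theorem BoundedVariationOn.continuous_variationOnFromTo {α E : Type*} [LinearOrder α]
    [TopologicalSpace α] [OrderTopology α] [PseudoEMetricSpace E] {f : α → E}
    (hf : BoundedVariationOn f univ) (hc : Continuous f) (a : α) :
    Continuous (variationOnFromTo f univ a) := by
  refine continuous_iff_continuousAt.2 fun x => ?_
  have split : variationOnFromTo f univ a = fun y => variationOnFromTo f univ a x +
      ((eVariationOn f (univ ∩ Icc x y)).toReal - (eVariationOn f (univ ∩ Icc y x)).toReal) := by
    ext y
    rw [← variationOnFromTo_eq_sub, variationOnFromTo.add hf.locallyBoundedVariationOn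
      (mem_univ _) (mem_univ _) (mem_univ _)]
  have right := hf.tendsto_eVariationOn_Icc_zero_right x hc.continuousWithinAt
  have left := hf.tendsto_eVariationOn_Icc_zero_left (x := x) hc.continuousWithinAt
  rw [nhdsWithin_univ] at right left
  have lim := (tendsto_const_nhds (x := variationOnFromTo f univ a x)).add
    (((ENNReal.tendsto_toReal ENNReal.zero_ne_top).comp right).sub
      ((ENNReal.tendsto_toReal ENNReal.zero_ne_top).comp left))
  rw [ContinuousAt]
  nth_rw 1 [split]
  simpa using lim

theorem AddCircle.norm_coe_eq_min {p x : ℝ} (hx₀ : 0 ≤ x) (hxp : x ≤ p) :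
    ‖(x : AddCircle p)‖ = min x (p - x) := by
  rcases hx₀.trans hxp |>.eq_or_lt with rfl | hp
  · obtain rfl : x = 0 := le_antisymm hxp hx₀
    simp
  rcases le_total x (p / 2) with h | h
  · rw [(norm_coe_eq_abs_iff p hp.ne').2 (by rw [abs_of_nonneg hx₀, abs_of_pos hp]; exact h),
      abs_of_nonneg hx₀, min_eq_left (by linarith)]
  · rw [show (x : AddCircle p) = (x - p : ℝ) by rw [coe_sub, coe_period, sub_zero],
      (norm_coe_eq_abs_iff p hp.ne').2 (by
        rw [abs_of_nonpos (by linarith), abs_of_pos hp]; linarith),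
      abs_of_nonpos (by linarith), min_eq_right (by linarith), neg_sub]

theorem surjective_coe_addCircle_comp {p : ℝ} (hp : 0 < p) {v : I → ℝ} (hv : Continuous v)
    (h₀ : v 0 = 0) (h₁ : v 1 = p) : Function.Surjective fun u => (v u : AddCircle p) := by
  have := Fact.mk hp
  intro z
  obtain ⟨u, hu⟩ : (AddCircle.equivIco p 0 z : ℝ) ∈ range v := by
    refine intermediate_value_univ 0 1 hv ?_
    rw [h₀, h₁]
    exact Ico_subset_Icc_self (by simpa using (AddCircle.equivIco p 0 z).2)
  exact ⟨u, by simp only [hu, AddCircle.coe_equivIco]⟩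

theorem Function.Surjective.exists_isometry_comp_eq {ι Y Z : Type*} [PseudoMetricSpace Y]
    [MetricSpace Z] {φ : ι → Y} {g : ι → Z} (hφ : Function.Surjective φ)
    (h : ∀ i j, dist (g i) (g j) = dist (φ i) (φ j)) : ∃ c : Y → Z, Isometry c ∧ g = c ∘ φ := by
  refine ⟨g ∘ Function.surjInv hφ, Isometry.of_dist_eq fun y y' => ?_, funext fun i => ?_⟩
  · simp only [Function.comp_apply, h, Function.surjInv_eq]
  · refine dist_eq_zero.1 ?_
    simp only [Function.comp_apply, h, Function.surjInv_eq, dist_self]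

section Homotopy

variable {X : Type*} [TopologicalSpace X]

theorem Path.homotopic_subpath_trans_subpath_trans_subpath {y : X} (γ : Path y y) (s t : I) :
    γ.Homotopic ((((γ.subpath 0 s).cast γ.source.symm rfl).trans (γ.subpath s t)).trans
      ((γ.subpath t 1).cast rfl γ.target.symm)) := by
  have h := ((Path.Homotopy.subpathTransSubpath γ 0 s t).hcomp (.refl (γ.subpath t 1))).trans
    (Path.Homotopy.subpathTransSubpath γ 0 t 1)
  rw [Path.subpath_zero_one] at h
  exact ⟨h.symm⟩

open CategoryTheory in
theorem loopClass_eq_mul_of_homotopic {p y u v : X} (α : Path p y) {γ : Path y y}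
    (A : Path y u) (B : Path u v) (C : Path v y) (τ : Path u v)
    (hγ : γ.Homotopic ((A.trans B).trans C)) :
    loopClass α γ
      = loopClass α ((A.trans τ).trans C) * loopClass (α.trans A) (B.trans τ.symm) := by
  have hγ' : (FundamentalGroupoid.fromPath (X := TopCat.of X) ⟦γ⟧)
      = FundamentalGroupoid.fromPath ⟦(A.trans B).trans C⟧ := Quotient.sound hγ
  have htrans : ∀ {a b c : X} (P : Path a b) (Q : Path b c),
      FundamentalGroupoid.fromPath (X := TopCat.of X) ⟦P.trans Q⟧ =
        FundamentalGroupoid.fromPath ⟦P⟧ ≫ FundamentalGroupoid.fromPath ⟦Q⟧ := fun _ _ => rfl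
  have hsymm : ∀ {a b : X} (P : Path a b),
      FundamentalGroupoid.fromPath (X := TopCat.of X) ⟦P.symm⟧ =
        inv (FundamentalGroupoid.fromPath ⟦P⟧) := fun P => by
    rw [← Groupoid.inv_eq_inv]; rfl
  rw [End.mul_def]
  change FundamentalGroupoid.fromPath (X := TopCat.of X) ⟦(α.trans γ).trans α.symm⟧
    = FundamentalGroupoid.fromPath
        ⟦((α.trans A).trans (B.trans τ.symm)).trans (α.trans A).symm⟧
      ≫ FundamentalGroupoid.fromPath ⟦(α.trans ((A.trans τ).trans C)).trans α.symm⟧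
  simp [htrans, hsymm, hγ']

end Homotopy

section PathLength

variable {X : Type*} [MetricSpace X]

theorem pathLength_subpath {a b : X} (γ : Path a b) {s t : I} (h : s ≤ t) :
    pathLength (γ.subpath s t) = eVariationOn γ (Icc s t) := by
  rw [pathLength, Path.subpath, Path.coe_mk', ContinuousMap.coe_mk,
    eVariationOn.comp_eq_of_monotoneOn _ _ ((Set.Icc.monotone_convexComb h).monotoneOn _),
    image_univ, Path.range_subpathAux, uIcc_of_le h]

theorem edist_le_pathLength {a b : X} (γ : Path a b) : edist a b ≤ pathLength γ := by
  simpa [pathLength] using eVariationOn.edist_le γ (mem_univ 0) (mem_univ 1)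

theorem pathLength_subpath_add_subpath {a b : X} (γ : Path a b) (u : I) :
    pathLength (γ.subpath 0 u) + pathLength (γ.subpath u 1) = pathLength γ := by
  have split := eVariationOn.Icc_add_Icc (s := univ) γ unitInterval.nonneg'
    unitInterval.le_one' (mem_univ u)
  rwa [univ_inter, univ_inter, univ_inter, ← unitInterval.univ_eq_Icc,
    ← pathLength_subpath _ unitInterval.nonneg', ← pathLength_subpath _ unitInterval.le_one']
    at split

theorem pathLength_symm {a b : X} (γ : Path a b) : pathLength γ.symm = pathLength γ := by
  change eVariationOn (γ ∘ unitInterval.symm) univ = _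
  rw [eVariationOn.comp_eq_of_antitoneOn _ _
      (unitInterval.strictAnti_symm.antitone.antitoneOn _),
    image_univ_of_surjective unitInterval.symm_bijective.surjective, pathLength]

theorem pathLength_trans {a b c : X} (γ : Path a b) (γ' : Path b c) :
    pathLength (γ.trans γ') = pathLength γ + pathLength γ' := by
  set half : I := ⟨1 / 2, mem_Icc.2 ⟨by norm_num, by norm_num⟩⟩
  have first : ⇑((γ.trans γ').subpath 0 half) = γ := by
    ext u
    change (γ.trans γ') (Icc.convexComb 0 half u) = γ u
    rw [Path.trans_apply, dif_pos (by
      change (1 - (u : ℝ)) * 0 + u * (1 / 2) ≤ 1 / 2; linarith [u.2.2])]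
    congr 1
    ext
    change 2 * ((1 - (u : ℝ)) * 0 + u * (1 / 2)) = u
    ring
  have second : ⇑((γ.trans γ').subpath half 1) = γ' := by
    ext u
    change (γ.trans γ') (Icc.convexComb half 1 u) = γ' u
    rw [Path.trans_apply]
    split_ifs with hu
    · change (1 - (u : ℝ)) * (1 / 2) + u * 1 ≤ 1 / 2 at hu
      obtain rfl : u = 0 := Subtype.ext (le_antisymm (by rw [Icc.coe_zero]; linarith) u.2.1)
      rw [Path.source]
      convert γ.target
      change 2 * ((1 - 0) * (1 / 2) + 0 * 1 : ℝ) = 1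
      norm_num
    · congr 1
      ext
      change 2 * ((1 - (u : ℝ)) * (1 / 2) + u * 1) - 1 = u
      ring
  rw [← pathLength_subpath_add_subpath (γ.trans γ') half]
  exact congrArg₂ (· + ·) (congrArg (eVariationOn · univ) first)
    (congrArg (eVariationOn · univ) second)

theorem edist_add_edist_le_pathLength {a b : X} (γ : Path a b) (u : I) :
    edist a (γ u) + edist (γ u) b ≤ pathLength γ :=
  calc edist a (γ u) + edist (γ u) b = edist (γ 0) (γ u) + edist (γ u) (γ 1) := by simp
    _ ≤ pathLength (γ.subpath 0 u) + pathLength (γ.subpath u 1) :=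
        add_le_add (edist_le_pathLength _) (edist_le_pathLength _)
    _ = pathLength γ := pathLength_subpath_add_subpath γ u

theorem mem_ball_of_pathLength_lt {x : X} (β : Path x x) {r : ℝ}
    (h : pathLength β < ENNReal.ofReal (2 * r)) (u : I) : β u ∈ Metric.ball x r := by
  have : 2 * edist x (β u) < 2 * ENNReal.ofReal r := by
    calc 2 * edist x (β u) = edist x (β u) + edist (β u) x := by rw [two_mul, edist_comm (β u)]
      _ ≤ pathLength β := edist_add_edist_le_pathLength β u
      _ < ENNReal.ofReal (2 * r) := h
      _ = 2 * ENNReal.ofReal r := by rw [ENNReal.ofReal_mul zero_le_two, ENNReal.ofReal_ofNat]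
  rw [Metric.mem_ball, dist_comm, ← edist_lt_ofReal]
  exact (ENNReal.mul_lt_mul_iff_right two_ne_zero ENNReal.ofNat_ne_top).1 this

theorem pathLength_subpath_eq_ofReal {a b : X} {γ : Path a b} (hγ : BoundedVariationOn γ univ)
    {s t : I} (h : s ≤ t) :
    pathLength (γ.subpath s t) = ENNReal.ofReal (variationOnFromTo γ univ s t) := by
  rw [pathLength_subpath γ h, variationOnFromTo.eq_of_le _ _ h, univ_inter,
    ENNReal.ofReal_toReal (ne_top_of_le_ne_top hγ (eVariationOn.mono _ (subset_univ _)))]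

theorem variationOnFromTo_zero_one {a b : X} (γ : Path a b) :
    variationOnFromTo γ univ 0 1 = (pathLength γ).toReal := by
  rw [variationOnFromTo.eq_of_le _ _ zero_le_one, univ_inter, ← unitInterval.univ_eq_Icc]
  rfl

theorem variationOnFromTo_add_add {a b : X} {γ : Path a b} (hγ : BoundedVariationOn γ univ)
    (s t : I) : variationOnFromTo γ univ 0 s + variationOnFromTo γ univ s t +
      variationOnFromTo γ univ t 1 = (pathLength γ).toReal := by
  have := hγ.locallyBoundedVariationOn
  rw [variationOnFromTo.add this (mem_univ _) (mem_univ _) (mem_univ _),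
    variationOnFromTo.add this (mem_univ _) (mem_univ _) (mem_univ _), variationOnFromTo_zero_one]

theorem IsLengthSpace.exists_pathLength_lt (hX : IsLengthSpace X) {x x' : X} {r : ℝ}
    (h : dist x x' < r) : ∃ τ : Path x x', pathLength τ < ENNReal.ofReal r :=
  iInf_lt_iff.1 (hX x x' ▸ (ENNReal.ofReal_lt_ofReal_iff_of_nonneg dist_nonneg).2 h)

end PathLength

section ClosedGeodesic

variable {X : Type*} [MetricSpace X]

theorem loopClass_mem_coveringGroup_of_pathLength_lt {p y : X} (α : Path p y) (β : Path y y)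
    {δ : ℝ} (h : pathLength β < ENNReal.ofReal (2 * δ)) : loopClass α β ∈ coveringGroup X p δ :=
  Subgroup.subset_normalClosure ⟨y, β, α, ⟨y, mem_ball_of_pathLength_lt β h⟩, rfl⟩

theorem loopClass_mem_coveringGroup_of_shortcut {p y : X} (α : Path p y) (γ : Path y y) {δ : ℝ}
    {s t : I} (τ : Path (γ s) (γ t))
    (h₁ : pathLength (γ.subpath 0 s) + pathLength τ + pathLength (γ.subpath t 1)
      < ENNReal.ofReal (2 * δ))
    (h₂ : pathLength (γ.subpath s t) + pathLength τ < ENNReal.ofReal (2 * δ)) :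
    loopClass α γ ∈ coveringGroup X p δ := by
  rw [loopClass_eq_mul_of_homotopic α _ _ _ τ
    (Path.homotopic_subpath_trans_subpath_trans_subpath γ s t)]
  refine Subgroup.mul_mem _ (loopClass_mem_coveringGroup_of_pathLength_lt _ _ ?_)
    (loopClass_mem_coveringGroup_of_pathLength_lt _ _ ?_)
  · rwa [pathLength_trans, pathLength_trans]
  · rwa [pathLength_trans, pathLength_symm]

theorem dist_le_min_variationOnFromTo {y : X} {γ : Path y y} (hγ : BoundedVariationOn γ univ)
    {s t : I} (h : s ≤ t) :
    dist (γ s) (γ t) ≤ min (variationOnFromTo γ univ s t)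
      ((pathLength γ).toReal - variationOnFromTo γ univ s t) := by
  have hsum := variationOnFromTo_add_add hγ s t
  have dist_le_subpath : ∀ {u v : I}, u ≤ v → dist (γ u) (γ v) ≤ variationOnFromTo γ univ u v :=
    fun huv => (edist_le_ofReal (variationOnFromTo.nonneg_of_le γ univ huv)).1
      ((edist_le_pathLength _).trans (pathLength_subpath_eq_ofReal hγ huv).le)
  refine le_min (dist_le_subpath h) ?_
  calc dist (γ s) (γ t) ≤ dist (γ 0) (γ s) + dist (γ t) (γ 1) := by
        simpa [dist_comm] using dist_triangle (γ s) y (γ t)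
    _ ≤ variationOnFromTo γ univ 0 s + variationOnFromTo γ univ t 1 :=
        add_le_add (dist_le_subpath unitInterval.nonneg') (dist_le_subpath unitInterval.le_one')
    _ = _ := by linarith

theorem min_variationOnFromTo_le_dist (hX : IsLengthSpace X) {p y : X} (α : Path p y)
    {γ : Path y y} {δ : ℝ} (hδ : 0 ≤ δ) (htot : pathLength γ = ENNReal.ofReal (2 * δ))
    (hnot : loopClass α γ ∉ coveringGroup X p δ) {s t : I} (h : s ≤ t) :
    min (variationOnFromTo γ univ s t) (2 * δ - variationOnFromTo γ univ s t) ≤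
      dist (γ s) (γ t) := by
  have hγ : BoundedVariationOn γ univ := show pathLength γ ≠ ⊤ from htot ▸ ENNReal.ofReal_ne_top
  have hsum := variationOnFromTo_add_add hγ s t
  rw [htot, ENNReal.toReal_ofReal (by linarith)] at hsum
  set before := variationOnFromTo γ univ 0 s
  set ℓ := variationOnFromTo γ univ s t
  set after := variationOnFromTo γ univ t 1
  have h_before : 0 ≤ before := variationOnFromTo.nonneg_of_le γ univ unitInterval.nonneg'
  have hℓ : 0 ≤ ℓ := variationOnFromTo.nonneg_of_le γ univ h
  have h_after : 0 ≤ after := variationOnFromTo.nonneg_of_le γ univ unitInterval.le_one'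
  by_contra! hlt
  obtain ⟨τ, hτ⟩ := hX.exists_pathLength_lt hlt
  refine hnot (loopClass_mem_coveringGroup_of_shortcut α γ τ ?_ ?_)
  · rw [pathLength_subpath_eq_ofReal hγ unitInterval.nonneg',
      pathLength_subpath_eq_ofReal hγ unitInterval.le_one']
    calc _ < ENNReal.ofReal before + ENNReal.ofReal ℓ + ENNReal.ofReal after :=
          ENNReal.add_lt_add_right ENNReal.ofReal_ne_top (ENNReal.add_lt_add_left
            ENNReal.ofReal_ne_top (hτ.trans_le (ENNReal.ofReal_le_ofReal (min_le_left _ _))))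
      _ = ENNReal.ofReal (2 * δ) := by
          rw [← ENNReal.ofReal_add h_before hℓ, ← ENNReal.ofReal_add (by linarith) h_after, hsum]
  · rw [pathLength_subpath_eq_ofReal hγ h]
    calc _ < ENNReal.ofReal ℓ + ENNReal.ofReal (2 * δ - ℓ) :=
          ENNReal.add_lt_add_left ENNReal.ofReal_ne_top
            (hτ.trans_le (ENNReal.ofReal_le_ofReal (min_le_right _ _)))
      _ = ENNReal.ofReal (2 * δ) := by rw [← ENNReal.ofReal_add hℓ (by linarith), add_sub_cancel]

theorem dist_eq_dist_coe_variationOnFromTo (hX : IsLengthSpace X) {p y : X} (α : Path p y)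
    {γ : Path y y} {δ : ℝ} (hδ : 0 ≤ δ) (htot : pathLength γ = ENNReal.ofReal (2 * δ))
    (hnot : loopClass α γ ∉ coveringGroup X p δ) (s t : I) :
    dist (γ s) (γ t) = dist (variationOnFromTo γ univ 0 s : AddCircle (2 * δ))
      (variationOnFromTo γ univ 0 t : AddCircle (2 * δ)) := by
  wlog h : s ≤ t
  · rw [dist_comm, this hX α hδ htot hnot t s (le_of_not_ge h), dist_comm]
  have hγ : BoundedVariationOn γ univ := show pathLength γ ≠ ⊤ from htot ▸ ENNReal.ofReal_ne_top
  have upper := dist_le_min_variationOnFromTo hγ h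
  rw [htot, ENNReal.toReal_ofReal (by linarith)] at upper
  rw [dist_eq_norm', ← AddCircle.coe_sub, variationOnFromTo.sub_right
    hγ.locallyBoundedVariationOn (mem_univ _) (mem_univ _) (mem_univ _),
    AddCircle.norm_coe_eq_min (variationOnFromTo.nonneg_of_le γ univ h)
      (sub_nonneg.1 ((dist_nonneg.trans upper).trans (min_le_right _ _)))]
  exact le_antisymm upper (min_variationOnFromTo_le_dist hX α hδ htot hnot h)

end ClosedGeodesic

theorem closed_geodesic_of_not_deltaHomotopic_general
    {X : Type*} [MetricSpace X] (hX : IsLengthSpace X)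
    (p : X) (δ : ℝ) (hδ : 0 < δ) {y : X} (γ : Path y y) (α : Path p y)
    (hlen : pathLength γ ≤ ENNReal.ofReal (2 * δ))
    (hnot : loopClass α γ ∉ coveringGroup X p δ) :
    pathLength γ = ENNReal.ofReal (2 * δ) ∧
    ∃ c : ℝ → X, Continuous c ∧ Function.Periodic c (2 * δ) ∧
      (∀ s t : ℝ, |s - t| ≤ δ → dist (c s) (c t) = |s - t|) ∧
      ∃ φ : I → ℝ, Monotone φ ∧ φ 0 = 0 ∧ φ 1 = 2 * δ ∧ ∀ t, γ t = c (φ t) := by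
  have htot : pathLength γ = ENNReal.ofReal (2 * δ) :=
    hlen.eq_of_not_lt fun h => hnot (loopClass_mem_coveringGroup_of_pathLength_lt α γ h)
  have hγ : BoundedVariationOn γ univ :=
    show pathLength γ ≠ ⊤ from htot ▸ ENNReal.ofReal_ne_top
  have hv₀ : variationOnFromTo γ univ 0 0 = 0 := variationOnFromTo.self _ _ _
  have hv₁ : variationOnFromTo γ univ 0 1 = 2 * δ := by
    rw [variationOnFromTo_zero_one, htot, ENNReal.toReal_ofReal (by linarith)]
  obtain ⟨c, hc, hγc⟩ := (surjective_coe_addCircle_comp (by linarith)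
    (hγ.continuous_variationOnFromTo γ.continuous 0) hv₀ hv₁).exists_isometry_comp_eq
    (dist_eq_dist_coe_variationOnFromTo hX α hδ.le htot hnot)
  refine ⟨htot, c ∘ (↑), hc.continuous.comp continuous_quotient_mk', fun s => ?_,
    fun s t hst => ?_, _, monotoneOn_univ.1
      (variationOnFromTo.monotoneOn hγ.locallyBoundedVariationOn (mem_univ 0)), hv₀, hv₁,
    congrFun hγc⟩
  · simp only [Function.comp_apply, AddCircle.coe_add_period]
  · rw [Function.comp_apply, Function.comp_apply, hc.dist_eq, dist_eq_norm, ← AddCircle.coe_sub,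
      AddCircle.norm_coe_eq_abs_iff _ (by linarith)]
    rwa [abs_of_pos (by linarith : (0 : ℝ) < 2 * δ), mul_div_cancel_left₀ _ two_ne_zero]

/-- In a path-connected length space, a rectifiable loop of length `≤ 2δ`
which is not δ-homotopic to a point has length exactly `2δ`, and its arclength
parametrization extends to a `2δ`-periodic map `c : ℝ → X` with
`dist (c s) (c t) = |s - t|` whenever `|s - t| ≤ δ` (a closed geodesic of length `2δ`,
minimizing on every subinterval of half its length). -/
theorem closed_geodesic_of_not_deltaHomotopic
    {X : Type*} [MetricSpace X] [PathConnectedSpace X] (hX : IsLengthSpace X)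
    (p : X) (δ : ℝ) (hδ : 0 < δ) {y : X} (γ : Path y y) (α : Path p y)
    (hlen : pathLength γ ≤ ENNReal.ofReal (2 * δ))
    (hnot : loopClass α γ ∉ coveringGroup X p δ) :
    pathLength γ = ENNReal.ofReal (2 * δ) ∧
    ∃ c : ℝ → X, Continuous c ∧ Function.Periodic c (2 * δ) ∧
      (∀ s t : ℝ, |s - t| ≤ δ → dist (c s) (c t) = |s - t|) ∧
      ∃ φ : I → ℝ, Monotone φ ∧ φ 0 = 0 ∧ φ 1 = 2 * δ ∧ ∀ t, γ t = c (φ t) :=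
  closed_geodesic_of_not_deltaHomotopic_general hX p δ hδ γ α hlen hnot
end

section
/- Let X be a path-connected metric space with basepoint x, let R > 0, and let 0 < δ₁ < δ₀. If [δ₁, δ₀) ∩ CovSpec^R_cut(X,x) = ∅, then π₁^{cut}(X,δ₁,R,x) = π₁^{cut}(X,δ₀,R,x). -/
/- Common definitions: path length, length/geodesic spaces, δ-covering groups,
   covering spectra, cut-off covering groups and spectra, free homotopy,
   loops-to-infinity. -/

open Metric Filter
open scoped NNReal ENNReal unitInterval

attribute [local instance] Path.Homotopic.setoid

private lemma cutCoveringGroup_mono' {X : Type*} [MetricSpace X] (x : X) {δ δ' R : ℝ}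
    (h : δ ≤ δ') : cutCoveringGroup X x δ R ≤ cutCoveringGroup X x δ' R := by
  apply Subgroup.normalClosure_mono
  rintro g ⟨y, β, α, hcond, rfl⟩
  refine ⟨y, β, α, ?_, rfl⟩
  rcases hcond with ⟨c, hc⟩ | h2
  · exact Or.inl ⟨c, fun t => Metric.ball_subset_ball h (hc t)⟩
  · exact Or.inr h2

/-- If `[δ₁, δ₀)` misses the `R` cut-off covering spectrum, then the
corresponding cut-off covering groups agree. -/
theorem cutCoveringGroup_eq_of_gap
    {X : Type*} [MetricSpace X] [PathConnectedSpace X] (x : X)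
    (R δ₁ δ₀ : ℝ) (hR : 0 < R) (hδ₁ : 0 < δ₁) (h₁₀ : δ₁ < δ₀)
    (hgap : Set.Ico δ₁ δ₀ ∩ cutCovSpec X x R = ∅) :
    cutCoveringGroup X x δ₁ R = cutCoveringGroup X x δ₀ R := by
  set G := fun δ => cutCoveringGroup X x δ R with hG
  set T := {δ | δ ∈ Set.Icc δ₁ δ₀ ∧ G δ = G δ₁} with hT
  have hT1 : δ₁ ∈ T := ⟨⟨le_refl _, le_of_lt h₁₀⟩, rfl⟩
  have hbdd : BddAbove T := ⟨δ₀, fun a ha => ha.1.2⟩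
  have hdc : ∀ δ ∈ T, ∀ δ'', δ₁ ≤ δ'' → δ'' ≤ δ → δ'' ∈ T := by
    intro δ hδ δ'' h1 h2
    refine ⟨⟨h1, le_trans h2 hδ.1.2⟩, le_antisymm ?_ (cutCoveringGroup_mono' x h1)⟩
    calc G δ'' ≤ G δ := cutCoveringGroup_mono' x h2
    _ = G δ₁ := hδ.2
  set s := sSup T with hs
  have hs1 : δ₁ ≤ s := le_csSup hbdd hT1
  have hs0 : s ≤ δ₀ := csSup_le ⟨δ₁, hT1⟩ (fun a ha => ha.1.2)
  have hsT : G s = G δ₁ := by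
    rcases eq_or_lt_of_le hs1 with h | h
    · rw [← h]
    · refine le_antisymm ?_ (cutCoveringGroup_mono' x hs1)
      apply Subgroup.normalClosure_le_normal
      rintro g ⟨y, β, α, hcond, rfl⟩
      rcases hcond with ⟨c, hc⟩ | hout
      · obtain ⟨t₀, -, ht₀⟩ := isCompact_univ.exists_isMaxOn (Set.univ_nonempty)
          ((continuous_dist.comp (β.continuous.prodMk continuous_const)).continuousOn)
        have hm : dist (β t₀) c < s := Metric.mem_ball.mp (hc t₀)
        set δ'' := max δ₁ ((dist (β t₀) c + s) / 2) with hδ''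
        have hmlt : dist (β t₀) c < δ'' :=
          lt_of_lt_of_le (by linarith) (le_max_right _ _)
        have hlt : δ'' < s := max_lt h (by linarith)
        obtain ⟨a, ha, halt⟩ := exists_lt_of_lt_csSup ⟨δ₁, hT1⟩ hlt
        have hδ''T : δ'' ∈ T := hdc a ha δ'' (le_max_left _ _) (le_of_lt halt)
        have : loopClass α β ∈ G δ'' := Subgroup.subset_normalClosure
          ⟨y, β, α, Or.inl ⟨c, fun t => Metric.mem_ball.mpr
            (lt_of_le_of_lt (ht₀ (Set.mem_univ t)) hmlt)⟩, rfl⟩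
        rwa [hδ''T.2] at this
      · exact Subgroup.subset_normalClosure ⟨y, β, α, Or.inr hout, rfl⟩
  rcases eq_or_lt_of_le hs0 with h | h
  · rw [← h]; exact hsT.symm
  · have hns : s ∉ cutCovSpec X x R := by
      intro hmem
      have : s ∈ Set.Ico δ₁ δ₀ ∩ cutCovSpec X x R := ⟨⟨hs1, h⟩, hmem⟩
      rw [hgap] at this; exact this
    have hpos : 0 < s := lt_of_lt_of_le hδ₁ hs1
    simp only [cutCovSpec, Set.mem_setOf_eq, not_and, not_forall] at hns
    obtain ⟨δ', hδ', heq⟩ := hns hpos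
    rw [not_not] at heq
    rcases le_or_gt δ₀ δ' with h2 | h2
    · refine le_antisymm (cutCoveringGroup_mono' x (le_of_lt h₁₀)) ?_
      calc cutCoveringGroup X x δ₀ R ≤ G δ' := cutCoveringGroup_mono' x h2
      _ = G s := heq
      _ = G δ₁ := hsT
    · exfalso
      have : δ' ∈ T := ⟨⟨le_trans hs1 (le_of_lt hδ'), le_of_lt h2⟩, heq.trans hsT⟩
      exact absurd (le_csSup hbdd this) (not_le.mpr hδ')
end

section
/- Let X be a path-connected metric space with basepoint x₀ in which closed bounded sets are compact. If X has the loops-to-infinity property, then π₁^{cut}(X,δ,R,x₀) = π₁(X,x₀) for every δ > 0 and every R > 0; consequently CovSpec^R_cut(X,x₀) = ∅ for every R > 0. -/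
/- Common definitions: path length, length/geodesic spaces, δ-covering groups,
   covering spectra, cut-off covering groups and spectra, free homotopy,
   loops-to-infinity. -/

open Metric Filter
open scoped NNReal ENNReal unitInterval

attribute [local instance] Path.Homotopic.setoid

/-! A free homotopy `H` from `γ` to a loop `η` avoiding the compact ball `B̄(x₀, R)` conjugates
`γ` to `η` along the track `α` of the basepoint under `H`, so the class of `γ` is the generator
`α⁻¹ · η · α` of `π₁^{cut}(X, δ, R, x₀)`. Hence every cut-off covering group is all of
`π₁(X, x₀)`, independently of `δ`, and the cut-off covering spectra are empty. -/

namespace Path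

variable {X : Type*} [TopologicalSpace X]

theorem Homotopic.of_coe_eq {x y x' y' : X} {p q : Path x y} {p' q' : Path x' y'}
    (h : p.Homotopic q) (hp : ⇑p' = ⇑p) (hq : ⇑q' = ⇑q) : p'.Homotopic q' := by
  obtain rfl : x' = x := by simpa using congrFun hp 0
  obtain rfl : y' = y := by simpa using congrFun hp 1
  obtain rfl : p' = p := Path.ext hp
  obtain rfl : q' = q := Path.ext hq
  exact h

theorem coe_trans_congr {x y z x' y' z' : X} {p : Path x y} {q : Path y z}
    {p' : Path x' y'} {q' : Path y' z'} (hp : ⇑p' = ⇑p) (hq : ⇑q' = ⇑q) :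
    ⇑(p'.trans q') = ⇑(p.trans q) := by
  funext t
  simp only [Path.trans_apply, hp, hq]

theorem Homotopic.trans_symm_of_trans {a b : X} {γ : Path a a} {α : Path a b} {η : Path b b}
    (h : (γ.trans α).Homotopic (α.trans η)) : γ.Homotopic ((α.trans η).trans α.symm) :=
  calc γ ≈ γ.trans (Path.refl a) := ⟨(Path.Homotopy.transRefl γ).symm⟩
    _ ≈ γ.trans (α.trans α.symm) := (Path.Homotopic.refl γ).hcomp ⟨Path.Homotopy.reflTransSymm α⟩
    _ ≈ (γ.trans α).trans α.symm := ⟨(Path.Homotopy.transAssoc γ α α.symm).symm⟩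
    _ ≈ (α.trans η).trans α.symm := h.hcomp (Path.Homotopic.refl α.symm)

end Path

instance unitInterval.simplyConnectedSpace_prod : SimplyConnectedSpace (I × I) :=
  haveI : ContractibleSpace I := (convex_Icc (0 : ℝ) 1).contractibleSpace ⟨0, by simp⟩
  inferInstance

namespace FreelyHomotopic

variable {X : Type*} [TopologicalSpace X] {a b : X} {γ : Path a a} {η : Path b b}

theorem exists_homotopic_trans (h : FreelyHomotopic γ η) :
    ∃ α : Path a b, (γ.trans α).Homotopic (α.trans η) := by
  obtain ⟨H, h0, h1, hloop⟩ := h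
  let α : Path a b := ⟨⟨fun s => H (s, 0), by fun_prop⟩, by simp [h0], by simp [h1]⟩
  refine ⟨α, ?_⟩
  -- the two boundary paths of the square `I × I` from `(0, 0)` to `(1, 1)`, pushed forward by `H`
  have hsquare := (SimplyConnectedSpace.paths_homotopic
    (((Path.refl 0).prod .id).trans (Path.id.prod (Path.refl 1)))
    ((Path.id.prod (Path.refl 0)).trans ((Path.refl 1).prod .id))).map H
  simp only [Path.map_trans] at hsquare
  refine hsquare.of_coe_eq (Path.coe_trans_congr ?_ ?_) (Path.coe_trans_congr ?_ ?_) <;>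
    funext t <;> simp [α, h0, h1, hloop]

theorem exists_homotopic_conj (h : FreelyHomotopic γ η) :
    ∃ α : Path a b, γ.Homotopic ((α.trans η).trans α.symm) :=
  h.exists_homotopic_trans.imp fun _ => Path.Homotopic.trans_symm_of_trans

end FreelyHomotopic

section CutCoveringGroup

variable {X : Type*} [MetricSpace X]

theorem LoopToInfinity.fromPath_mem_cutCoveringGroup [ProperSpace X] {x : X} {γ : Path x x}
    (hγ : LoopToInfinity γ) (δ R : ℝ) :
    FundamentalGroup.fromPath ⟦γ⟧ ∈ cutCoveringGroup X x δ R := by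
  obtain ⟨b, η, hη, hγη⟩ := hγ (closedBall x R) (isCompact_closedBall x R)
  obtain ⟨α, hα⟩ := hγη.exists_homotopic_conj
  have : FundamentalGroup.fromPath ⟦γ⟧ = loopClass α η := congrArg _ (Quotient.sound hα)
  exact this ▸ Subgroup.subset_normalClosure ⟨b, η, α, .inr hη, rfl⟩

theorem LoopsToInfinity.cutCoveringGroup_eq_top [ProperSpace X] (h : LoopsToInfinity X)
    (x : X) (δ R : ℝ) : cutCoveringGroup X x δ R = ⊤ := by
  refine eq_top_iff.2 fun g _ => ?_
  obtain ⟨γ, rfl⟩ : ∃ γ : Path x x, FundamentalGroup.fromPath ⟦γ⟧ = g :=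
    Quotient.exists_rep (FundamentalGroup.toPath g)
  exact (h x γ).fromPath_mem_cutCoveringGroup δ R

theorem cutCovSpec_eq_empty_of_forall_eq_top {x : X} {R : ℝ}
    (h : ∀ δ > 0, cutCoveringGroup X x δ R = ⊤) : cutCovSpec X x R = ∅ :=
  Set.eq_empty_of_forall_notMem fun δ ⟨hδ, hne⟩ =>
    hne (δ + 1) (by linarith) ((h _ (by linarith)).trans (h δ hδ).symm)

end CutCoveringGroup

theorem cutCoveringGroup_eq_top_of_loopsToInfinity_general
    {X : Type*} [MetricSpace X] [ProperSpace X] (x₀ : X)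
    (h : LoopsToInfinity X) :
    (∀ δ : ℝ, 0 < δ → ∀ R : ℝ, 0 < R → cutCoveringGroup X x₀ δ R = ⊤) ∧
    (∀ R : ℝ, 0 < R → cutCovSpec X x₀ R = ∅) :=
  ⟨fun δ _ R _ => h.cutCoveringGroup_eq_top x₀ δ R,
    fun R _ => cutCovSpec_eq_empty_of_forall_eq_top fun δ _ => h.cutCoveringGroup_eq_top x₀ δ R⟩

/-- In a path-connected metric space in which closed bounded sets are
compact, the loops-to-infinity property makes all `R` cut-off δ-covering groups equal
to the whole fundamental group, so all `R` cut-off covering spectra are empty. -/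
theorem cutCoveringGroup_eq_top_of_loopsToInfinity
    {X : Type*} [MetricSpace X] [PathConnectedSpace X] [ProperSpace X] (x₀ : X)
    (h : LoopsToInfinity X) :
    (∀ δ : ℝ, 0 < δ → ∀ R : ℝ, 0 < R → cutCoveringGroup X x₀ δ R = ⊤) ∧
    (∀ R : ℝ, 0 < R → cutCovSpec X x₀ R = ∅) :=
  cutCoveringGroup_eq_top_of_loopsToInfinity_general x₀ h
end

section
/- Let M and N be nonempty complete locally compact length spaces, both noncompact, and equip the product M × N with the max metric d((m₁,n₁),(m₂,n₂)) = max(d_M(m₁,m₂), d_N(n₁,n₂)). Then M × N has the loops-to-infinity property: every loop in M × N is, for every compact set K ⊆ M × N, freely homotopic to a loop contained in (M × N) ∖ K. -/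
/-! Project a loop in `X × Y` to its two factors. In a path-connected space, conjugating a loop
by a path is a free homotopy, so the first factor can be moved to a point `x` outside the first
projection of `K` and made to rest at `x` for the second half of the time, and the second factor
moved to a point `y` outside the second projection of `K`, resting at `y` for the first half.
At every time one coordinate of the resulting loop is `x` or `y`, so the loop avoids `K`. -/

open Metric Filter
open scoped NNReal ENNReal unitInterval

attribute [local instance] Path.Homotopic.setoid

section FreeHomotopy

variable {X Y : Type*} [TopologicalSpace X] [TopologicalSpace Y]

theorem Path.Homotopic.freelyHomotopic {a : X} {γ₀ γ₁ : Path a a} (h : γ₀.Homotopic γ₁) :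
    FreelyHomotopic γ₀ γ₁ := by
  obtain ⟨F⟩ := h
  exact ⟨F.toContinuousMap, F.apply_zero, F.apply_one, fun s => by simp⟩

theorem FreelyHomotopic.trans {a b c : X} {γ₀ : Path a a} {γ₁ : Path b b} {γ₂ : Path c c}
    (h₀₁ : FreelyHomotopic γ₀ γ₁) (h₁₂ : FreelyHomotopic γ₁ γ₂) : FreelyHomotopic γ₀ γ₂ := by
  obtain ⟨H, H₀, H₁, hH⟩ := h₀₁
  obtain ⟨G, G₀, G₁, hG⟩ := h₁₂
  let F : ContinuousMap.Homotopy γ₀.toContinuousMap γ₂.toContinuousMap :=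
    ContinuousMap.Homotopy.trans ⟨H, H₀, H₁⟩ ⟨G, G₀, G₁⟩
  refine ⟨F.toContinuousMap, F.apply_zero, F.apply_one, fun s => ?_⟩
  change F (s, 0) = F (s, 1)
  simp only [F, ContinuousMap.Homotopy.trans_apply]
  split_ifs
  · exact hH _
  · exact hG _

theorem FreelyHomotopic.prod {a : X × Y} {x : X} {y : Y} {γ : Path a a} {η₁ : Path x x}
    {η₂ : Path y y} (h₁ : FreelyHomotopic (γ.map continuous_fst) η₁)
    (h₂ : FreelyHomotopic (γ.map continuous_snd) η₂) : FreelyHomotopic γ (η₁.prod η₂) := by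
  obtain ⟨H₁, H₁₀, H₁₁, hH₁⟩ := h₁
  obtain ⟨H₂, H₂₀, H₂₁, hH₂⟩ := h₂
  refine ⟨H₁.prodMk H₂, fun t => ?_, fun t => ?_, fun s => ?_⟩
  · simp [H₁₀, H₂₀]
  · simp [H₁₁, H₂₁]
  · simp [hH₁, hH₂]

theorem freelyHomotopic_of_continuous_family {c : I → X} (L : ∀ s, Path (c s) (c s))
    (hL : Continuous ↿L) {a b : X} {γ₀ : Path a a} {γ₁ : Path b b} (h₀ : ∀ t, L 0 t = γ₀ t)
    (h₁ : ∀ t, L 1 t = γ₁ t) : FreelyHomotopic γ₀ γ₁ :=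
  ⟨⟨↿L, hL⟩, h₀, h₁, fun s => (L s).source.trans (L s).target.symm⟩

theorem freelyHomotopic_conj {a b : X} (γ : Path a a) (w : Path a b) :
    FreelyHomotopic γ (w.symm.trans (γ.trans w)) := by
  -- Drag the basepoint along `w`: at time `s`, conjugate `γ` by the part of `w` up to `s`.
  let L (s : I) : Path (w s) (w s) :=
    (w.subpath s 0).trans ((γ.cast w.source w.source).trans (w.subpath 0 s))
  have hL : Continuous ↿L := by
    refine Path.trans_continuous_family _ ?_ _ (Path.trans_continuous_family _ ?_ _ ?_)
    · exact w.subpath_continuous_family.comp (f := fun p : I × I => (p.1, 0, p.2)) (by fun_prop)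
    · exact (map_continuous _).comp continuous_snd
    · exact w.subpath_continuous_family.comp (f := fun p : I × I => (0, p.1, p.2)) (by fun_prop)
  have h₀ : FreelyHomotopic γ ((Path.refl a).trans (γ.trans (Path.refl a))) :=
    Path.Homotopic.freelyHomotopic ⟨((Path.Homotopy.reflTrans _).trans (.transRefl γ)).symm⟩
  refine h₀.trans (freelyHomotopic_of_continuous_family L hL (fun t => ?_) (fun t => ?_))
  · simp [L, Path.trans_apply]
  · have hw : w.subpath 1 0 = (w.cast w.source w.target).symm := by
      rw [← Path.symm_subpath, Path.subpath_zero_one]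
    simp [L, hw, Path.trans_apply]

variable [PathConnectedSpace X]

theorem exists_freelyHomotopic_trans_refl {a : X} (γ : Path a a) (b : X) :
    ∃ η : Path b b, FreelyHomotopic γ (η.trans (Path.refl b)) := by
  obtain ⟨w⟩ := PathConnectedSpace.joined a b
  exact ⟨_, (freelyHomotopic_conj γ w).trans
    (Path.Homotopic.freelyHomotopic ⟨(Path.Homotopy.transRefl _).symm⟩)⟩

theorem exists_freelyHomotopic_refl_trans {a : X} (γ : Path a a) (b : X) :
    ∃ η : Path b b, FreelyHomotopic γ ((Path.refl b).trans η) := by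
  obtain ⟨w⟩ := PathConnectedSpace.joined a b
  exact ⟨_, (freelyHomotopic_conj γ w).trans
    (Path.Homotopic.freelyHomotopic ⟨(Path.Homotopy.reflTrans _).symm⟩)⟩

end FreeHomotopy

theorem Path.trans_refl_apply_eq_or_refl_trans_apply_eq {X Y : Type*} [TopologicalSpace X]
    [TopologicalSpace Y] {x x' : X} {y y' : Y} (p : Path x x') (q : Path y y') (t : I) :
    p.trans (Path.refl x') t = x' ∨ (Path.refl y).trans q t = y := by
  rw [Path.trans_apply, Path.trans_apply]
  split_ifs <;> simp

theorem loopsToInfinity_prod_of_pathConnectedSpace {X Y : Type*} [TopologicalSpace X]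
    [TopologicalSpace Y] [PathConnectedSpace X] [PathConnectedSpace Y] [NoncompactSpace X]
    [NoncompactSpace Y] : LoopsToInfinity (X × Y) := by
  intro a γ K hK
  obtain ⟨x, hx⟩ := (Set.ne_univ_iff_exists_notMem _).1 (hK.image continuous_fst).ne_univ
  obtain ⟨y, hy⟩ := (Set.ne_univ_iff_exists_notMem _).1 (hK.image continuous_snd).ne_univ
  obtain ⟨η₁, h₁⟩ := exists_freelyHomotopic_trans_refl (γ.map continuous_fst) x
  obtain ⟨η₂, h₂⟩ := exists_freelyHomotopic_refl_trans (γ.map continuous_snd) y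
  refine ⟨(x, y), (η₁.trans (.refl x)).prod ((Path.refl y).trans η₂), fun t ht => ?_,
    h₁.prod h₂⟩
  rcases Path.trans_refl_apply_eq_or_refl_trans_apply_eq η₁ η₂ t with h | h
  · exact hx ⟨_, ht, h⟩
  · exact hy ⟨_, ht, h⟩

theorem IsLengthSpace.pathConnectedSpace {X : Type*} [MetricSpace X] [Nonempty X]
    (h : IsLengthSpace X) : PathConnectedSpace X where
  nonempty := ‹_›
  joined x y := by
    by_contra hxy
    have : IsEmpty (Path x y) := not_nonempty_iff.1 hxy
    exact ENNReal.ofReal_ne_top ((h x y).trans (iInf_of_empty _))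

theorem loopsToInfinity_prod_general
    {M N : Type*} [MetricSpace M] [MetricSpace N]
    [Nonempty M] [Nonempty N]
    [NoncompactSpace M] [NoncompactSpace N]
    (hM : IsLengthSpace M) (hN : IsLengthSpace N) :
    LoopsToInfinity (M × N) :=
  have := hM.pathConnectedSpace
  have := hN.pathConnectedSpace
  loopsToInfinity_prod_of_pathConnectedSpace

/-- The product (with the max metric, which is the metric on `M × N` in
Mathlib) of two nonempty noncompact complete locally compact length spaces has the
loops-to-infinity property. -/
theorem loopsToInfinity_prod
    {M N : Type*} [MetricSpace M] [MetricSpace N]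
    [Nonempty M] [Nonempty N] [CompleteSpace M] [CompleteSpace N]
    [LocallyCompactSpace M] [LocallyCompactSpace N]
    [NoncompactSpace M] [NoncompactSpace N]
    (hM : IsLengthSpace M) (hN : IsLengthSpace N) :
    LoopsToInfinity (M × N) :=
  loopsToInfinity_prod_general hM hN
end

section
/- Let M be a path-connected metric space, let S ⊆ M be a nonempty subset equipped with the restricted metric, and let P : M → S be a distance nonincreasing (1-Lipschitz) map with P(s) = s for every s ∈ S, such that the composition of P with the inclusion S ↪ M is homotopic to the identity map of M. Then CovSpec(M) = CovSpec(S), where both covering spectra are computed with a basepoint s₀ ∈ S and with metric balls of the respective metric. (This applies in particular to the 1-Lipschitz Sharafutdinov retraction of a complete noncompact Alexandrov space of nonnegative curvature onto its soul, yielding CovSpec(M) = CovSpec(soul).) -/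
/- Common definitions: path length, length/geodesic spaces, δ-covering groups,
   covering spectra, cut-off covering groups and spectra, free homotopy,
   loops-to-infinity. -/

open Metric Filter
open scoped NNReal ENNReal unitInterval

attribute [local instance] Path.Homotopic.setoid

/-!
A 1-Lipschitz map sends every loop lying in a `δ`-ball into a `δ`-ball, so both the retraction
`P : M → S` and the inclusion `S ↪ M` carry `δ`-covering groups into `δ`-covering groups. On
fundamental groups `P_* ∘ ι_* = id`, and since `ι ∘ P` is homotopic to the identity,
`ι_* ∘ P_*` is conjugation by the trace of the basepoint; hence `P_*` is an isomorphism mapping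
`π₁(M, δ, s₀)` onto `π₁(S, δ, s₀)` for every `δ`, and the two spectra coincide.
-/

open FundamentalGroup

namespace Path.Homotopic.Quotient

theorem cast_symm_trans_trans {X : Type*} [TopologicalSpace X] {x y y' : X} (hy : y' = y)
    (γ : Path.Homotopic.Quotient x y) (δ : Path.Homotopic.Quotient x x) :
    (γ.symm.trans (δ.trans γ)).cast hy hy =
      (γ.cast rfl hy).symm.trans (δ.trans (γ.cast rfl hy)) := by
  subst hy
  simp

end Path.Homotopic.Quotient

namespace FundamentalGroup

open Path.Homotopic.Quotient

variable {X Y Z : Type*} [TopologicalSpace X] [TopologicalSpace Y] [TopologicalSpace Z]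

theorem mapOfEq_loopClass (f : C(X, Y)) {x : X} {y : Y} (h : f x = y) {z : X}
    (α : Path x z) (β : Path z z) :
    mapOfEq f h (loopClass α β) =
      loopClass ((α.map f.continuous).cast h.symm rfl) (β.map f.continuous) := by
  subst h
  rw [mapOfEq_apply, cast_rfl_rfl]
  exact congrArg mk (by simp only [Path.map_trans, Path.map_symm, Path.cast_rfl_rfl])

theorem mapOfEq_mapOfEq (f : C(X, Y)) (g : C(Y, Z)) {x : X} {y : Y} {z : Z}
    (hf : f x = y) (hg : g y = z) (a : FundamentalGroup X x) :
    mapOfEq g hg (mapOfEq f hf a) = mapOfEq (g.comp f) (by simp [hf, hg]) a := by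
  subst hf hg
  simp only [mapOfEq_apply, cast_rfl_rfl, map_comp]

theorem mapOfEq_id {x : X} (a : FundamentalGroup X x) :
    mapOfEq (ContinuousMap.id X) (y := x) rfl a = a := by
  refine (mapOfEq_apply _ _ a).trans ?_
  induction a using Path.Homotopic.Quotient.ind
  rfl

theorem exists_mapOfEq_eq_conj {f g : C(X, Y)} (hfg : f.Homotopic g) {x : X} {y : Y}
    (hf : f x = y) (hg : g x = y) :
    ∃ τ : FundamentalGroup Y y, ∀ a, mapOfEq g hg a = τ * mapOfEq f hf a * τ⁻¹ := by
  obtain ⟨H⟩ := hfg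
  subst hf
  refine ⟨(mk (H.evalAt x)).cast rfl hg.symm, fun a => ?_⟩
  induction a using Path.Homotopic.Quotient.ind with | mk p => ?_
  have naturality : (mk (p.map f.continuous)).trans (mk (H.evalAt x)) =
      (mk (H.evalAt x)).trans (mk (p.map g.continuous)) :=
    eq.mpr (Path.Homotopic.map_trans_evalAt H p)
  have conj : mk (p.map g.continuous) =
      (mk (H.evalAt x)).symm.trans ((mk (p.map f.continuous)).trans (mk (H.evalAt x))) := by
    rw [naturality, ← trans_assoc, symm_trans, refl_trans]
  rw [mapOfEq_apply, mapOfEq_apply, ← mk_map, ← mk_map, conj, cast_symm_trans_trans,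
    cast_rfl_rfl]
  rfl

theorem mapOfEq_injective_of_homotopic_id {f : C(X, X)} (hf : f.Homotopic (.id X)) {x : X}
    (h : f x = x) : Function.Injective (mapOfEq f h) := by
  obtain ⟨τ, hτ⟩ := exists_mapOfEq_eq_conj hf h rfl
  intro a b hab
  rw [← mapOfEq_id a, ← mapOfEq_id b, hτ, hτ, hab]

end FundamentalGroup

theorem map_coveringGroup_le {X Y : Type*} [MetricSpace X] [MetricSpace Y] (f : C(X, Y))
    (hf : LipschitzWith 1 f) {x : X} {y : Y} (h : f x = y) (δ : ℝ) :
    (coveringGroup X x δ).map (mapOfEq f h) ≤ coveringGroup Y y δ := by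
  rw [Subgroup.map_le_iff_le_comap]
  refine Subgroup.normalClosure_le_normal ?_
  rintro _ ⟨z, β, α, ⟨c, hc⟩, rfl⟩
  rw [SetLike.mem_coe, Subgroup.mem_comap, mapOfEq_loopClass]
  refine Subgroup.subset_normalClosure ⟨f z, β.map f.continuous, _, ⟨f c, fun t => ?_⟩, rfl⟩
  simpa using hf.mapsTo_ball one_ne_zero c δ (hc t)

theorem Subgroup.map_eq_of_leftInverse {G H : Type*} [Group G] [Group H] {φ : G →* H}
    {ψ : H →* G} {A : Subgroup G} {B : Subgroup H} (hφ : A.map φ ≤ B) (hψ : B.map ψ ≤ A)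
    (h : Function.LeftInverse φ ψ) : A.map φ = B :=
  hφ.antisymm fun b hb => ⟨ψ b, hψ ⟨b, hb, rfl⟩, h b⟩

theorem covSpec_eq_of_map_coveringGroup_eq {X Y : Type*} [MetricSpace X] [MetricSpace Y]
    {x : X} {y : Y} (φ : FundamentalGroup X x →* FundamentalGroup Y y)
    (hφ : Function.Injective φ)
    (hmap : ∀ δ, (coveringGroup X x δ).map φ = coveringGroup Y y δ) :
    covSpec X x = covSpec Y y := by
  ext δ
  simp only [covSpec, Set.mem_ofPred_eq, ← hmap, (Subgroup.map_injective hφ).ne_iff]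

theorem covSpec_eq_of_lipschitz_retraction_general
    {M : Type*} [MetricSpace M]
    (S : Set M) (P : M → S) (hP : LipschitzWith 1 P)
    (hretr : ∀ s : S, P (s : M) = s)
    (hhom : ContinuousMap.Homotopic
      (⟨fun m => ((P m : S) : M),
        continuous_subtype_val.comp hP.continuous⟩ : C(M, M))
      (ContinuousMap.id M))
    (s₀ : M) (hs₀ : s₀ ∈ S) :
    covSpec M s₀ = covSpec S ⟨s₀, hs₀⟩ := by
  let Pc : C(M, S) := ⟨P, hP.continuous⟩
  let ι : C(S, M) := ⟨Subtype.val, continuous_subtype_val⟩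
  let Φ := mapOfEq Pc (hretr ⟨s₀, hs₀⟩)
  let Ψ := mapOfEq ι (rfl : ι ⟨s₀, hs₀⟩ = s₀)
  have hPι : Pc.comp ι = .id S := ContinuousMap.ext hretr
  have hΦΨ : Function.LeftInverse Φ Ψ := fun a => by
    simp only [Φ, Ψ, mapOfEq_mapOfEq, hPι, mapOfEq_id]
  have hΨΦ : Ψ ∘ Φ = mapOfEq (ι.comp Pc) (congrArg Subtype.val (hretr ⟨s₀, hs₀⟩)) :=
    funext (mapOfEq_mapOfEq Pc ι _ rfl)
  have hΦ : Function.Injective Φ :=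
    .of_comp (f := Ψ) (hΨΦ ▸ mapOfEq_injective_of_homotopic_id hhom _)
  refine covSpec_eq_of_map_coveringGroup_eq Φ hΦ fun δ => ?_
  exact Subgroup.map_eq_of_leftInverse (map_coveringGroup_le Pc hP _ δ)
    (map_coveringGroup_le ι (LipschitzWith.subtype_val S) rfl δ) hΦΨ

/-- If `P : M → S` is a 1-Lipschitz retraction of a path-connected
metric space onto a subset `S` (restricted metric) with `incl ∘ P` homotopic to the
identity of `M`, then the covering spectra of `M` and of `S` (computed at a basepoint
`s₀ ∈ S`) agree. -/
theorem covSpec_eq_of_lipschitz_retraction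
    {M : Type*} [MetricSpace M] [PathConnectedSpace M]
    (S : Set M) (P : M → S) (hP : LipschitzWith 1 P)
    (hretr : ∀ s : S, P (s : M) = s)
    (hhom : ContinuousMap.Homotopic
      (⟨fun m => ((P m : S) : M),
        continuous_subtype_val.comp hP.continuous⟩ : C(M, M))
      (ContinuousMap.id M))
    (s₀ : M) (hs₀ : s₀ ∈ S) :
    covSpec M s₀ = covSpec S ⟨s₀, hs₀⟩ :=
  covSpec_eq_of_lipschitz_retraction_general S P hP hretr hhom s₀ hs₀
end
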